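/- arXiv:2107.09620 — 3 statements merged into one kernel-verified Lean document; each statement's English description precedes it below -/
import Mathlib

section
/- Let n and m be positive integers, let a ≥ 1 be an integer with 2m(a+1) < n, and let δ > 0. Then there exists C > 0 (depending only on n, m, a, δ) such that for all distinct u₀, u₁ ∈ ℝⁿ, ∫_{ℝⁿ} (⟨u₀−u⟩^{(n+1)/2 − 2ma} / |u₀−u|^{n−2ma}) · ⟨u⟩^{−(n+1)/2 − δ} · (⟨u−u₁⟩^{(n+1)/2 − 2m} / |u−u₁|^{n−2m}) du ≤ C ⟨u₀−u₁⟩^{(n+1)/2 − 2m(a+1)} / |u₀−u₁|^{n−2m(a+1)}. -/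
/-!
Write `K_σ(x) = ⟨x⟩^(α - σ) / |x|^(d - σ)` and `w(u) = ⟨u⟩^(-β)`, with `d = n`,
`α = (n + 1) / 2`, `β = α + δ`, `s = 2ma`, `t = 2m`. The kernel `K_σ` is `O(|x|^(σ - d))` near
`0` and `O(⟨x⟩^(α - d))` away from `0`; since `(α - d) - β < -d`, the integrals
`∫ K_σ(u - v) w(u) du` are bounded uniformly in `v`.

Let `r = |u₀ - u₁|`; at every `u`, one of `|u - u₀|`, `|u - u₁|` is at least `r / 2`.
If `r ≥ 1`, the kernel at that distance is `O(⟨r⟩^(α - d))`, and the other kernel times the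
weight integrates to `O(1)`. If `r ≤ 1`, the region `|u - u₀| ≥ 1` contributes `O(1)`, and on
`|u - u₀| ≤ 1` the integrand is dominated by `|u - u₀|^(s - d) |u - u₁|^(t - d)`, whose integral
is `O(r^(s + t - d))` by splitting at the balls of radius `r / 2` and scaling. In both regimes
this is `O(K_(s+t)(r))`.
-/

open MeasureTheory Real Set

open Metric Module
open scoped ENNReal NNReal

lemma rpow_le_max_one_rpow {b c : ℝ} (hb : 1 ≤ b) (hbc : b ≤ c) (p : ℝ) :
    b ^ p ≤ max 1 (c ^ p) := by
  rcases le_total 0 p with hp | hp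
  · exact le_max_of_le_right (Real.rpow_le_rpow (by linarith) hbc hp)
  · exact le_max_of_le_left (Real.rpow_le_one_of_one_le_of_nonpos hb hp)

lemma rpow_mul_rpow_le_rpow_add_add_rpow_add {x y p q : ℝ} (hx : 0 < x) (hy : 0 < y)
    (hp : p ≤ 0) (hq : q ≤ 0) : x ^ p * y ^ q ≤ x ^ (p + q) + y ^ (p + q) := by
  rcases le_total x y with hxy | hxy
  · calc x ^ p * y ^ q ≤ x ^ p * x ^ q :=
          mul_le_mul_of_nonneg_left (Real.rpow_le_rpow_of_nonpos hx hxy hq) (by positivity)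
      _ = x ^ (p + q) := (Real.rpow_add hx p q).symm
      _ ≤ _ := le_add_of_nonneg_right (by positivity)
  · calc x ^ p * y ^ q ≤ y ^ p * y ^ q :=
          mul_le_mul_of_nonneg_right (Real.rpow_le_rpow_of_nonpos hy hxy hp) (by positivity)
      _ = y ^ (p + q) := (Real.rpow_add hy p q).symm
      _ ≤ _ := le_add_of_nonneg_left (by positivity)

lemma rpow_mul_rpow_le_ite_add_ite {x y ρ p q : ℝ} (hx : 0 ≤ x) (hy : 0 ≤ y) (hρ : 0 < ρ)
    (hxy : 2 * ρ ≤ x + y) (hp : p ≤ 0) (hq : q ≤ 0) :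
    x ^ p * y ^ q ≤ (if x < ρ then ρ ^ q * x ^ p else x ^ (p + q))
      + (if y < ρ then ρ ^ p * y ^ q else y ^ (q + p)) := by
  by_cases hxρ : x < ρ
  · have hyρ : ρ ≤ y := by linarith
    rw [if_pos hxρ, if_neg hyρ.not_gt, mul_comm (ρ ^ q)]
    calc x ^ p * y ^ q ≤ x ^ p * ρ ^ q :=
          mul_le_mul_of_nonneg_left (Real.rpow_le_rpow_of_nonpos hρ hyρ hq) (by positivity)
      _ ≤ _ := le_add_of_nonneg_right (by positivity)
  by_cases hyρ : y < ρ
  · have hρx : ρ ≤ x := by linarith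
    rw [if_neg hxρ, if_pos hyρ]
    calc x ^ p * y ^ q ≤ ρ ^ p * y ^ q :=
          mul_le_mul_of_nonneg_right (Real.rpow_le_rpow_of_nonpos hρ hρx hp) (by positivity)
      _ ≤ _ := le_add_of_nonneg_left (by positivity)
  rw [if_neg hxρ, if_neg hyρ, add_comm q p]
  exact rpow_mul_rpow_le_rpow_add_add_rpow_add (hρ.trans_le (not_lt.mp hxρ))
    (hρ.trans_le (not_lt.mp hyρ)) hp hq

lemma ENNReal.ofReal_mul_add_ofReal_mul {a x b y : ℝ} (ha : 0 ≤ a) (hx : 0 ≤ x) (hb : 0 ≤ b)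
    (hy : 0 ≤ y) :
    ENNReal.ofReal a * ENNReal.ofReal x + ENNReal.ofReal b * ENNReal.ofReal y
      = ENNReal.ofReal (a * x + b * y) := by
  rw [← ENNReal.ofReal_mul ha, ← ENNReal.ofReal_mul hb,
    ← ENNReal.ofReal_add (by positivity) (by positivity)]

noncomputable def japaneseBracket (t : ℝ) : ℝ := √(1 + t ^ 2)

lemma one_le_japaneseBracket (t : ℝ) : 1 ≤ japaneseBracket t :=
  Real.one_le_sqrt.mpr (by nlinarith)

lemma japaneseBracket_pos (t : ℝ) : 0 < japaneseBracket t :=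
  one_pos.trans_le (one_le_japaneseBracket t)

lemma le_japaneseBracket (t : ℝ) : t ≤ japaneseBracket t :=
  Real.le_sqrt_of_sq_le (by linarith)

lemma japaneseBracket_le_one_add {t : ℝ} (ht : 0 ≤ t) : japaneseBracket t ≤ 1 + t :=
  Real.sqrt_le_iff.mpr ⟨by linarith, by nlinarith⟩

lemma japaneseBracket_le_japaneseBracket {t t' : ℝ} (ht : 0 ≤ t) (htt' : t ≤ t') :
    japaneseBracket t ≤ japaneseBracket t' :=
  Real.sqrt_le_sqrt (by nlinarith)

lemma japaneseBracket_rpow_le_one {p : ℝ} (hp : p ≤ 0) (t : ℝ) : japaneseBracket t ^ p ≤ 1 :=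
  Real.rpow_le_one_of_one_le_of_nonpos (one_le_japaneseBracket t) hp

lemma japaneseBracket_half_rpow_le {p : ℝ} (hp : p ≤ 0) (t : ℝ) :
    japaneseBracket (t / 2) ^ p ≤ 2 ^ (-p) * japaneseBracket t ^ p := by
  have hb := japaneseBracket_pos t
  have hhalf : japaneseBracket t / 2 ≤ japaneseBracket (t / 2) := by
    rw [japaneseBracket, japaneseBracket, div_le_iff₀ zero_lt_two]
    calc √(1 + t ^ 2) ≤ √(2 ^ 2 * (1 + (t / 2) ^ 2)) := Real.sqrt_le_sqrt (by nlinarith)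
      _ = √(1 + (t / 2) ^ 2) * 2 := by
          rw [Real.sqrt_mul (by positivity), Real.sqrt_sq zero_le_two, mul_comm]
  calc japaneseBracket (t / 2) ^ p ≤ (japaneseBracket t / 2) ^ p :=
        Real.rpow_le_rpow_of_nonpos (by positivity) hhalf hp
    _ = 2 ^ (-p) * japaneseBracket t ^ p := by
        rw [Real.div_rpow hb.le zero_le_two, div_eq_mul_inv, ← Real.rpow_neg zero_le_two,
          mul_comm]

@[fun_prop]
lemma continuous_japaneseBracket : Continuous japaneseBracket := by
  unfold japaneseBracket; fun_prop

noncomputable def kernelProfile (d : ℕ) (α s r : ℝ) : ℝ :=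
  japaneseBracket r ^ (α - s) / r ^ ((d : ℝ) - s)

section KernelProfile

variable {d : ℕ} {α s r : ℝ}

lemma kernelProfile_nonneg (hr : 0 ≤ r) : 0 ≤ kernelProfile d α s r := by
  have := japaneseBracket_pos r
  unfold kernelProfile; positivity

@[fun_prop]
lemma measurable_kernelProfile : Measurable (kernelProfile d α s) := by
  unfold kernelProfile; fun_prop

lemma kernelProfile_le_of_le_two (hr₀ : 0 ≤ r) (hr₂ : r ≤ 2) (hs : s < d) :
    kernelProfile d α s r ≤ max 1 (3 ^ (α - s)) * r ^ (s - d) := by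
  rcases hr₀.eq_or_lt with rfl | hr₀
  · simp [kernelProfile, Real.zero_rpow (sub_ne_zero.mpr hs.ne'),
      Real.zero_rpow (sub_ne_zero.mpr hs.ne)]
  have hbr : japaneseBracket r ≤ 3 := by linarith [japaneseBracket_le_one_add hr₀.le]
  rw [kernelProfile, div_eq_mul_inv, ← Real.rpow_neg hr₀.le, neg_sub]
  gcongr
  exact rpow_le_max_one_rpow (one_le_japaneseBracket r) hbr _

lemma kernelProfile_le_of_half_le (hr : 1 / 2 ≤ r) (hs : s ≤ d) :
    kernelProfile d α s r ≤ 3 ^ ((d : ℝ) - s) * japaneseBracket r ^ (α - d) := by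
  have hr₀ : 0 < r := by linarith
  have hbr : japaneseBracket r / 3 ≤ r := by linarith [japaneseBracket_le_one_add hr₀.le]
  have hb := japaneseBracket_pos r
  calc kernelProfile d α s r
      ≤ japaneseBracket r ^ (α - s) / (japaneseBracket r / 3) ^ ((d : ℝ) - s) := by
        unfold kernelProfile; gcongr
    _ = 3 ^ ((d : ℝ) - s) * japaneseBracket r ^ (α - d) := by
        rw [Real.div_rpow hb.le (by norm_num), div_div_eq_mul_div, mul_comm, mul_div_assoc,
          ← Real.rpow_sub hb]
        ring_nf

lemma kernelProfile_le_of_half_le_of_le {ρ : ℝ} (hρ : 1 / 2 ≤ ρ) (hρr : ρ ≤ r) (hs : s ≤ d)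
    (hα : α ≤ d) : kernelProfile d α s r ≤ 3 ^ ((d : ℝ) - s) * japaneseBracket ρ ^ (α - d) := by
  refine (kernelProfile_le_of_half_le (hρ.trans hρr) hs).trans ?_
  gcongr 3 ^ _ * ?_
  exact Real.rpow_le_rpow_of_nonpos (japaneseBracket_pos ρ)
    (japaneseBracket_le_japaneseBracket (by linarith) hρr) (by linarith)

lemma japaneseBracket_rpow_le_kernelProfile (hr : 0 < r) (hs : s ≤ d) :
    japaneseBracket r ^ (α - d) ≤ kernelProfile d α s r := by
  have hb := japaneseBracket_pos r
  calc japaneseBracket r ^ (α - d)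
      = japaneseBracket r ^ (α - s) / japaneseBracket r ^ ((d : ℝ) - s) := by
        rw [← Real.rpow_sub hb]; ring_nf
    _ ≤ kernelProfile d α s r := by
        unfold kernelProfile
        gcongr
        exact le_japaneseBracket r

lemma rpow_le_kernelProfile (hr₀ : 0 < r) (hr₁ : r ≤ 1) :
    r ^ (s - d) ≤ max 1 (2 ^ (s - α)) * kernelProfile d α s r := by
  have hb := japaneseBracket_pos r
  have hbr : japaneseBracket r ^ (s - α) ≤ max 1 (2 ^ (s - α)) :=
    rpow_le_max_one_rpow (one_le_japaneseBracket r)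
      (by linarith [japaneseBracket_le_one_add hr₀.le]) _
  calc r ^ (s - d) = japaneseBracket r ^ (s - α) * kernelProfile d α s r := by
        rw [kernelProfile, mul_div_assoc', ← Real.rpow_add hb, div_eq_mul_inv,
          ← Real.rpow_neg hr₀.le]
        ring_nf; simp
    _ ≤ max 1 (2 ^ (s - α)) * kernelProfile d α s r := by
        gcongr; exact kernelProfile_nonneg hr₀.le

lemma kernelProfile_mul_japaneseBracket_rpow_le {z β : ℝ} (hr : 1 / 2 ≤ r) (hs : s ≤ d)
    (hα : α ≤ d) (hβ : 0 ≤ β) :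
    kernelProfile d α s r * japaneseBracket z ^ (-β)
      ≤ 3 ^ ((d : ℝ) - s) * japaneseBracket r ^ (α - d - β)
        + 3 ^ ((d : ℝ) - s) * japaneseBracket z ^ (α - d - β) := by
  have := japaneseBracket_pos z
  calc kernelProfile d α s r * japaneseBracket z ^ (-β)
      ≤ 3 ^ ((d : ℝ) - s) * (japaneseBracket r ^ (α - d) * japaneseBracket z ^ (-β)) := by
        rw [← mul_assoc]; gcongr; exact kernelProfile_le_of_half_le hr hs
    _ ≤ _ := by
        rw [← mul_add, sub_eq_add_neg (α - d) β]
        gcongr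
        exact rpow_mul_rpow_le_rpow_add_add_rpow_add (japaneseBracket_pos _)
          (japaneseBracket_pos _) (by linarith) (by linarith)

lemma kernelProfile_mul_mul_kernelProfile_le_of_le_add_one {t x y w : ℝ} (hx : 0 ≤ x)
    (hy : 0 ≤ y) (hyx : y ≤ x + 1) (hw₀ : 0 ≤ w) (hw₁ : w ≤ 1) (hs : s < d) (ht : t < d)
    (hα : α ≤ d) :
    kernelProfile d α s x * w * kernelProfile d α t y
      ≤ max 1 (3 ^ (α - s)) * max 1 (3 ^ (α - t)) * (x ^ (s - d) * y ^ (t - d))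
        + 3 ^ ((d : ℝ) - s) * (kernelProfile d α t y * w) := by
  have hKs := kernelProfile_nonneg (d := d) (α := α) (s := s) hx
  have hKt := kernelProfile_nonneg (d := d) (α := α) (s := t) hy
  rcases le_or_gt x 1 with hx₁ | hx₁
  · refine le_add_of_le_of_nonneg ?_ (by positivity)
    calc kernelProfile d α s x * w * kernelProfile d α t y
        ≤ kernelProfile d α s x * kernelProfile d α t y := by
          gcongr; exact mul_le_of_le_one_right hKs hw₁
      _ ≤ (max 1 (3 ^ (α - s)) * x ^ (s - d)) * (max 1 (3 ^ (α - t)) * y ^ (t - d)) := by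
          gcongr
          · exact kernelProfile_le_of_le_two hx (by linarith) hs
          · exact kernelProfile_le_of_le_two hy (by linarith) ht
      _ = _ := by ring
  · refine le_add_of_nonneg_of_le (by positivity) ?_
    have hKs' : kernelProfile d α s x ≤ 3 ^ ((d : ℝ) - s) :=
      (kernelProfile_le_of_half_le (by linarith) hs.le).trans
        (mul_le_of_le_one_right (by positivity) (japaneseBracket_rpow_le_one (by linarith) _))
    calc kernelProfile d α s x * w * kernelProfile d α t y
        ≤ 3 ^ ((d : ℝ) - s) * w * kernelProfile d α t y := by gcongr
      _ = _ := by ring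

lemma kernelProfile_mul_mul_kernelProfile_le_of_two_mul_le_add {t x y w ρ : ℝ} (hx : 0 ≤ x)
    (hy : 0 ≤ y) (hρ : 1 / 2 ≤ ρ) (hxy : 2 * ρ ≤ x + y) (hw : 0 ≤ w) (hs : s ≤ d) (ht : t ≤ d)
    (hα : α ≤ d) :
    kernelProfile d α s x * w * kernelProfile d α t y
      ≤ 3 ^ ((d : ℝ) - t) * japaneseBracket ρ ^ (α - d) * (kernelProfile d α s x * w)
        + 3 ^ ((d : ℝ) - s) * japaneseBracket ρ ^ (α - d) * (kernelProfile d α t y * w) := by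
  have hKs := kernelProfile_nonneg (d := d) (α := α) (s := s) hx
  have hKt := kernelProfile_nonneg (d := d) (α := α) (s := t) hy
  have := japaneseBracket_pos ρ
  rcases le_or_gt ρ y with hρy | hyρ
  · refine le_add_of_le_of_nonneg ?_ (by positivity)
    calc kernelProfile d α s x * w * kernelProfile d α t y
        ≤ kernelProfile d α s x * w * (3 ^ ((d : ℝ) - t) * japaneseBracket ρ ^ (α - d)) := by
          gcongr; exact kernelProfile_le_of_half_le_of_le hρ hρy ht hα
      _ = _ := by ring
  · refine le_add_of_nonneg_of_le (by positivity) ?_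
    calc kernelProfile d α s x * w * kernelProfile d α t y
        ≤ 3 ^ ((d : ℝ) - s) * japaneseBracket ρ ^ (α - d) * w * kernelProfile d α t y := by
          gcongr; exact kernelProfile_le_of_half_le_of_le hρ (by linarith) hs hα
      _ = _ := by ring

end KernelProfile

lemma preimage_inv_smul_sub_ball_zero_one {E : Type*} [NormedAddCommGroup E] [NormedSpace ℝ E]
    (v : E) {ρ : ℝ} (hρ : 0 < ρ) : (fun u => ρ⁻¹ • (u - v)) ⁻¹' ball 0 1 = ball v ρ := by
  ext u
  rw [mem_preimage, mem_ball_zero_iff, mem_ball_iff_norm, norm_smul,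
    Real.norm_of_nonneg (inv_nonneg.mpr hρ.le), inv_mul_lt_iff₀ hρ, mul_one]

section Integrals

variable {E : Type*} [NormedAddCommGroup E] [NormedSpace ℝ E] [FiniteDimensional ℝ E]
  [MeasurableSpace E] [BorelSpace E] {μ : Measure E} [μ.IsAddHaarMeasure]

lemma lintegral_comp_inv_smul_sub {f : E → ℝ≥0∞} (hf : Measurable f) (v : E) {ρ : ℝ}
    (hρ : 0 < ρ) :
    ∫⁻ u, f (ρ⁻¹ • (u - v)) ∂μ = ENNReal.ofReal (ρ ^ finrank ℝ E) * ∫⁻ x, f x ∂μ := by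
  rw [lintegral_sub_right_eq_self (fun u => f (ρ⁻¹ • u)) v,
    ← lintegral_map hf (measurable_const_smul _), Measure.map_addHaar_smul μ (inv_ne_zero hρ.ne'),
    lintegral_smul_measure, inv_pow, inv_inv, abs_of_pos (by positivity), smul_eq_mul]

lemma setLIntegral_preimage_norm_sub_rpow (e : ℝ) (v : E) {ρ : ℝ} (hρ : 0 < ρ) {S : Set E}
    (hS : MeasurableSet S) :
    ∫⁻ u in (fun u => ρ⁻¹ • (u - v)) ⁻¹' S, ENNReal.ofReal (‖u - v‖ ^ e) ∂μ
      = ENNReal.ofReal (ρ ^ (e + finrank ℝ E)) * ∫⁻ x in S, ENNReal.ofReal (‖x‖ ^ e) ∂μ := by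
  have hscale : ∀ u : E, ‖u - v‖ ^ e = ρ ^ e * ‖ρ⁻¹ • (u - v)‖ ^ e := fun u => by
    rw [norm_smul, Real.norm_of_nonneg (inv_nonneg.mpr hρ.le), Real.mul_rpow (by positivity)
      (norm_nonneg _), ← mul_assoc, ← Real.mul_rpow hρ.le (by positivity), mul_inv_cancel₀ hρ.ne',
      Real.one_rpow, one_mul]
  have hmeas : Measurable (S.indicator fun x : E => ENNReal.ofReal (‖x‖ ^ e)) :=
    (Measurable.ennreal_ofReal (by fun_prop)).indicator hS
  have hpt : ∀ u, ((fun u => ρ⁻¹ • (u - v)) ⁻¹' S).indicator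
      (fun u => ENNReal.ofReal (‖u - v‖ ^ e)) u
      = ENNReal.ofReal (ρ ^ e)
        * S.indicator (fun x => ENNReal.ofReal (‖x‖ ^ e)) (ρ⁻¹ • (u - v)) := by
    intro u
    by_cases hu : ρ⁻¹ • (u - v) ∈ S
    · rw [indicator_of_mem hu, indicator_of_mem (by exact hu), hscale,
        ENNReal.ofReal_mul (by positivity)]
    · rw [indicator_of_notMem hu, indicator_of_notMem (by exact hu), mul_zero]
  rw [← lintegral_indicator (hS.preimage (by fun_prop)), lintegral_congr hpt,
    lintegral_const_mul' _ _ ENNReal.ofReal_ne_top, lintegral_comp_inv_smul_sub hmeas v hρ,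
    lintegral_indicator hS, ← mul_assoc, ← ENNReal.ofReal_mul (by positivity),
    Real.rpow_add hρ, Real.rpow_natCast]

lemma exists_setLIntegral_ball_norm_sub_rpow_le [Nontrivial E] {p : ℝ}
    (hp : -(finrank ℝ E : ℝ) < p) :
    ∃ C : ℝ≥0, ∀ (v : E) (ρ : ℝ), 0 < ρ →
      ∫⁻ u in ball v ρ, ENNReal.ofReal (‖u - v‖ ^ p) ∂μ
        ≤ ENNReal.ofReal (C * ρ ^ (p + finrank ℝ E)) := by
  have hint : IntegrableOn (fun x : E => ‖x‖ ^ p) (ball 0 1) μ :=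
    integrableOn_ball_of_norm_le_rpow (C := 1) (α := -p) finrank_pos (by linarith)
      (.of_forall fun x => by rw [Real.norm_of_nonneg (by positivity), one_mul, neg_neg])
      (measurable_norm.pow_const _).aestronglyMeasurable
  refine ⟨(∫⁻ x in ball 0 1, ENNReal.ofReal (‖x‖ ^ p) ∂μ).toNNReal, fun v ρ hρ => ?_⟩
  rw [← preimage_inv_smul_sub_ball_zero_one v hρ,
    setLIntegral_preimage_norm_sub_rpow _ v hρ measurableSet_ball, mul_comm,
    ENNReal.ofReal_mul NNReal.zero_le_coe, ENNReal.ofReal_coe_nnreal,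
    ENNReal.coe_toNNReal hint.lintegral_lt_top.ne]

lemma lintegral_japaneseBracket_rpow_lt_top {p : ℝ} (hp : p < -(finrank ℝ E : ℝ)) :
    ∫⁻ x, ENNReal.ofReal (japaneseBracket ‖x‖ ^ p) ∂μ < ∞ := by
  convert (integrable_rpow_neg_one_add_norm_sq (μ := μ) (r := -p) (by linarith)).lintegral_lt_top
    using 4 with x
  rw [japaneseBracket, Real.sqrt_eq_rpow, ← Real.rpow_mul (by positivity)]
  ring_nf

lemma exists_setLIntegral_compl_ball_norm_sub_rpow_le {p : ℝ}
    (hp : p < -(finrank ℝ E : ℝ)) :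
    ∃ C : ℝ≥0, ∀ (v : E) (ρ : ℝ), 0 < ρ →
      ∫⁻ u in (ball v ρ)ᶜ, ENNReal.ofReal (‖u - v‖ ^ p) ∂μ
        ≤ ENNReal.ofReal (C * ρ ^ (p + finrank ℝ E)) := by
  have hp₀ : p < 0 := hp.trans_le (neg_nonpos.mpr (Nat.cast_nonneg _))
  have hpt : ∀ x ∈ (ball (0 : E) 1)ᶜ, ENNReal.ofReal (‖x‖ ^ p)
      ≤ ENNReal.ofReal (2 ^ (-p)) * ENNReal.ofReal (japaneseBracket ‖x‖ ^ p) := fun x hx => by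
    have hx : 1 ≤ ‖x‖ := by simpa using hx
    have hb : japaneseBracket ‖x‖ / 2 ≤ ‖x‖ := by
      linarith [japaneseBracket_le_one_add (norm_nonneg x)]
    have := japaneseBracket_pos ‖x‖
    rw [← ENNReal.ofReal_mul (by positivity)]
    refine ENNReal.ofReal_le_ofReal ((Real.rpow_le_rpow_of_nonpos (by positivity) hb
      hp₀.le).trans_eq ?_)
    rw [Real.div_rpow this.le zero_le_two, div_eq_mul_inv, ← Real.rpow_neg zero_le_two, mul_comm]
  have hfin : ∫⁻ x in (ball (0 : E) 1)ᶜ, ENNReal.ofReal (‖x‖ ^ p) ∂μ < ∞ :=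
    calc _ ≤ ∫⁻ x in (ball (0 : E) 1)ᶜ,
          ENNReal.ofReal (2 ^ (-p)) * ENNReal.ofReal (japaneseBracket ‖x‖ ^ p) ∂μ :=
          setLIntegral_mono' measurableSet_ball.compl hpt
      _ ≤ ∫⁻ x, ENNReal.ofReal (2 ^ (-p)) * ENNReal.ofReal (japaneseBracket ‖x‖ ^ p) ∂μ :=
          setLIntegral_le_lintegral _ _
      _ < ∞ := by
          rw [lintegral_const_mul' _ _ ENNReal.ofReal_ne_top]
          exact ENNReal.mul_lt_top ENNReal.ofReal_lt_top
            (lintegral_japaneseBracket_rpow_lt_top hp)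
  refine ⟨(∫⁻ x in (ball (0 : E) 1)ᶜ, ENNReal.ofReal (‖x‖ ^ p) ∂μ).toNNReal, fun v ρ hρ => ?_⟩
  rw [← preimage_inv_smul_sub_ball_zero_one v hρ, ← preimage_compl,
    setLIntegral_preimage_norm_sub_rpow _ v hρ measurableSet_ball.compl, mul_comm,
    ENNReal.ofReal_mul NNReal.zero_le_coe, ENNReal.ofReal_coe_nnreal,
    ENNReal.coe_toNNReal hfin.ne]

lemma exists_lintegral_ite_norm_sub_rpow_le [Nontrivial E] {p q : ℝ}
    (hp : -(finrank ℝ E : ℝ) < p) (hpq : p + q < -(finrank ℝ E : ℝ)) :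
    ∃ C : ℝ≥0, ∀ (v : E) (ρ : ℝ), 0 < ρ →
      ∫⁻ u, ENNReal.ofReal (if ‖u - v‖ < ρ then ρ ^ q * ‖u - v‖ ^ p else ‖u - v‖ ^ (p + q)) ∂μ
        ≤ ENNReal.ofReal (C * ρ ^ (p + q + finrank ℝ E)) := by
  obtain ⟨C₁, h₁⟩ := exists_setLIntegral_ball_norm_sub_rpow_le (μ := μ) hp
  obtain ⟨C₂, h₂⟩ := exists_setLIntegral_compl_ball_norm_sub_rpow_le (μ := μ) hpq
  refine ⟨C₁ + C₂, fun v ρ hρ => ?_⟩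
  have hin : ∫⁻ u in ball v ρ, ENNReal.ofReal
      (if ‖u - v‖ < ρ then ρ ^ q * ‖u - v‖ ^ p else ‖u - v‖ ^ (p + q)) ∂μ
      = ENNReal.ofReal (ρ ^ q) * ∫⁻ u in ball v ρ, ENNReal.ofReal (‖u - v‖ ^ p) ∂μ := by
    rw [← lintegral_const_mul' _ _ ENNReal.ofReal_ne_top]
    refine setLIntegral_congr_fun measurableSet_ball fun u hu => ?_
    rw [if_pos (mem_ball_iff_norm.mp hu), ENNReal.ofReal_mul (by positivity)]
  have hout : ∫⁻ u in (ball v ρ)ᶜ, ENNReal.ofReal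
      (if ‖u - v‖ < ρ then ρ ^ q * ‖u - v‖ ^ p else ‖u - v‖ ^ (p + q)) ∂μ
      = ∫⁻ u in (ball v ρ)ᶜ, ENNReal.ofReal (‖u - v‖ ^ (p + q)) ∂μ :=
    setLIntegral_congr_fun measurableSet_ball.compl fun u hu => by
      rw [if_neg (by rwa [mem_compl_iff, mem_ball_iff_norm] at hu)]
  rw [← lintegral_add_compl _ measurableSet_ball, hin, hout]
  calc _ ≤ ENNReal.ofReal (ρ ^ q) * ENNReal.ofReal (C₁ * ρ ^ (p + finrank ℝ E))
        + ENNReal.ofReal (C₂ * ρ ^ (p + q + finrank ℝ E)) := by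
        gcongr
        exacts [h₁ v ρ hρ, h₂ v ρ hρ]
    _ = ENNReal.ofReal ((C₁ + C₂) * ρ ^ (p + q + finrank ℝ E)) := by
        rw [← ENNReal.ofReal_mul (by positivity), ← ENNReal.ofReal_add (by positivity)
          (by positivity), mul_left_comm, ← Real.rpow_add hρ, add_left_comm q p, ← add_assoc]
        ring_nf

lemma exists_lintegral_norm_sub_rpow_mul_norm_sub_rpow_le [Nontrivial E] {p q : ℝ}
    (hp : -(finrank ℝ E : ℝ) < p) (hq : -(finrank ℝ E : ℝ) < q)
    (hpq : p + q < -(finrank ℝ E : ℝ)) :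
    ∃ C : ℝ≥0, ∀ u₀ u₁ : E, u₀ ≠ u₁ →
      ∫⁻ u, ENNReal.ofReal (‖u - u₀‖ ^ p * ‖u - u₁‖ ^ q) ∂μ
        ≤ ENNReal.ofReal (C * ‖u₀ - u₁‖ ^ (p + q + finrank ℝ E)) := by
  obtain ⟨C₀, h₀⟩ := exists_lintegral_ite_norm_sub_rpow_le (μ := μ) hp hpq
  obtain ⟨C₁, h₁⟩ := exists_lintegral_ite_norm_sub_rpow_le (μ := μ) (q := p) hq (by linarith)
  refine ⟨(C₀ + C₁) * (2 : ℝ≥0) ^ (-(p + q + finrank ℝ E)), fun u₀ u₁ hne => ?_⟩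
  set ρ := ‖u₀ - u₁‖ / 2 with hρ_def
  have hρ : 0 < ρ := by have := norm_pos_iff.mpr (sub_ne_zero.mpr hne); positivity
  have hpt : ∀ u, ENNReal.ofReal (‖u - u₀‖ ^ p * ‖u - u₁‖ ^ q)
      ≤ ENNReal.ofReal (if ‖u - u₀‖ < ρ then ρ ^ q * ‖u - u₀‖ ^ p else ‖u - u₀‖ ^ (p + q))
        + ENNReal.ofReal
          (if ‖u - u₁‖ < ρ then ρ ^ p * ‖u - u₁‖ ^ q else ‖u - u₁‖ ^ (q + p)) := by
    intro u
    rw [← ENNReal.ofReal_add (by split_ifs <;> positivity) (by split_ifs <;> positivity)]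
    refine ENNReal.ofReal_le_ofReal (rpow_mul_rpow_le_ite_add_ite (norm_nonneg _)
      (norm_nonneg _) hρ ?_ (by linarith) (by linarith))
    linarith [norm_sub_le_norm_sub_add_norm_sub u₀ u u₁, norm_sub_rev u₀ u]
  calc _ ≤ _ := lintegral_mono hpt
    _ = _ := lintegral_add_left (Measurable.ennreal_ofReal (Measurable.ite
          (measurableSet_lt (by fun_prop) measurable_const) (by fun_prop) (by fun_prop))) _
    _ ≤ ENNReal.ofReal (C₀ * ρ ^ (p + q + finrank ℝ E))
          + ENNReal.ofReal (C₁ * ρ ^ (q + p + finrank ℝ E)) :=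
        add_le_add (h₀ u₀ ρ hρ) (h₁ u₁ ρ hρ)
    _ = _ := by
        rw [← ENNReal.ofReal_add (by positivity) (by positivity), add_comm q p, ← add_mul,
          Real.div_rpow (norm_nonneg _) zero_le_two, div_eq_mul_inv, ← Real.rpow_neg zero_le_two]
        push_cast
        ring_nf

lemma exists_lintegral_kernelProfile_mul_japaneseBracket_rpow_le {α β s : ℝ} (hs : 0 < s)
    (hsd : s < finrank ℝ E) (hαd : α ≤ finrank ℝ E) (hαβ : α < β) (hβ : 0 ≤ β) :
    ∃ M : ℝ≥0, ∀ v : E, ∫⁻ u, ENNReal.ofReal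
      (kernelProfile (finrank ℝ E) α s ‖u - v‖ * japaneseBracket ‖u‖ ^ (-β)) ∂μ
        ≤ ENNReal.ofReal M := by
  set d : ℕ := finrank ℝ E with hd
  have : Nontrivial E :=
    Module.nontrivial_of_finrank_pos (R := ℝ) (by rw [← hd]; exact_mod_cast hs.trans hsd)
  obtain ⟨C, hC⟩ := exists_setLIntegral_ball_norm_sub_rpow_le (μ := μ) (p := s - d)
    (by linarith)
  set F := ∫⁻ x, ENNReal.ofReal (japaneseBracket ‖x‖ ^ (α - d - β)) ∂μ
  have hF : F ≠ ∞ := (lintegral_japaneseBracket_rpow_lt_top (by linarith)).ne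
  set c := max 1 ((3 : ℝ) ^ (α - s))
  set B := ENNReal.ofReal c * ENNReal.ofReal C + ENNReal.ofReal (3 ^ ((d : ℝ) - s)) * (F + F)
  refine ⟨B.toNNReal, fun v => ?_⟩
  rw [ENNReal.ofReal_coe_nnreal, ENNReal.coe_toNNReal (by finiteness),
    ← lintegral_add_compl _ (measurableSet_ball (x := v) (ε := 1))]
  have hnear : ∀ u ∈ ball v 1, ENNReal.ofReal
      (kernelProfile d α s ‖u - v‖ * japaneseBracket ‖u‖ ^ (-β))
        ≤ ENNReal.ofReal c * ENNReal.ofReal (‖u - v‖ ^ (s - d)) := fun u hu => by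
    rw [← ENNReal.ofReal_mul (by positivity)]
    exact ENNReal.ofReal_le_ofReal ((mul_le_of_le_one_right (kernelProfile_nonneg (norm_nonneg _))
      (japaneseBracket_rpow_le_one (by linarith) _)).trans
      (kernelProfile_le_of_le_two (norm_nonneg _) (by linarith [mem_ball_iff_norm.mp hu]) hsd))
  have hfar : ∀ u ∈ (ball v 1)ᶜ, ENNReal.ofReal
      (kernelProfile d α s ‖u - v‖ * japaneseBracket ‖u‖ ^ (-β))
        ≤ ENNReal.ofReal (3 ^ ((d : ℝ) - s))
            * ENNReal.ofReal (japaneseBracket ‖u - v‖ ^ (α - d - β))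
          + ENNReal.ofReal (3 ^ ((d : ℝ) - s))
            * ENNReal.ofReal (japaneseBracket ‖u‖ ^ (α - d - β)) := fun u hu => by
    have hu : 1 ≤ ‖u - v‖ := by rwa [mem_compl_iff, mem_ball_iff_norm, not_lt] at hu
    have := japaneseBracket_pos ‖u - v‖
    have := japaneseBracket_pos ‖u‖
    rw [ENNReal.ofReal_mul_add_ofReal_mul (by positivity) (by positivity) (by positivity)
      (by positivity)]
    exact ENNReal.ofReal_le_ofReal
      (kernelProfile_mul_japaneseBracket_rpow_le (by linarith) hsd.le hαd hβ)
  refine add_le_add ?_ ?_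
  · calc _ ≤ _ := setLIntegral_mono' measurableSet_ball hnear
      _ ≤ _ := by
          rw [lintegral_const_mul' _ _ ENNReal.ofReal_ne_top]
          gcongr
          simpa using hC v 1 one_pos
  · calc _ ≤ _ := setLIntegral_mono' measurableSet_ball.compl hfar
      _ ≤ _ := setLIntegral_le_lintegral _ _
      _ = _ := by
          rw [lintegral_add_left (by fun_prop), lintegral_const_mul' _ _ ENNReal.ofReal_ne_top,
            lintegral_const_mul' _ _ ENNReal.ofReal_ne_top, ← mul_add,
            lintegral_sub_right_eq_self (fun x => ENNReal.ofReal
              (japaneseBracket ‖x‖ ^ (α - d - β))) v]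

lemma exists_lintegral_kernelProfile_mul_mul_kernelProfile_le_of_norm_le_one {α β s t : ℝ}
    (hs : 0 < s) (ht : 0 < t) (hst : s + t < finrank ℝ E) (hαd : α ≤ finrank ℝ E) (hαβ : α < β)
    (hβ : 0 ≤ β) :
    ∃ C : ℝ, ∀ u₀ u₁ : E, u₀ ≠ u₁ → ‖u₀ - u₁‖ ≤ 1 →
      ∫⁻ u, ENNReal.ofReal (kernelProfile (finrank ℝ E) α s ‖u₀ - u‖ * japaneseBracket ‖u‖ ^ (-β)
        * kernelProfile (finrank ℝ E) α t ‖u - u₁‖) ∂μ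
        ≤ ENNReal.ofReal (C * kernelProfile (finrank ℝ E) α (s + t) ‖u₀ - u₁‖) := by
  set d : ℕ := finrank ℝ E with hd
  have : Nontrivial E := Module.nontrivial_of_finrank_pos (R := ℝ) (by
    rw [← hd]; exact_mod_cast (by linarith : (0 : ℝ) < d))
  obtain ⟨R, hR⟩ := exists_lintegral_norm_sub_rpow_mul_norm_sub_rpow_le (μ := μ)
    (p := s - d) (q := t - d) (by linarith) (by linarith) (by linarith)
  obtain ⟨M, hM⟩ := exists_lintegral_kernelProfile_mul_japaneseBracket_rpow_le (μ := μ) ht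
    (by linarith) hαd hαβ hβ
  set c := max 1 ((3 : ℝ) ^ (α - s)) * max 1 ((3 : ℝ) ^ (α - t))
  refine ⟨(c * R + 3 ^ ((d : ℝ) - s) * M) * max 1 (2 ^ (s + t - α)), fun u₀ u₁ hne hr => ?_⟩
  have hr₀ : 0 < ‖u₀ - u₁‖ := norm_pos_iff.mpr (sub_ne_zero.mpr hne)
  have hpt : ∀ u, ENNReal.ofReal (kernelProfile d α s ‖u₀ - u‖ * japaneseBracket ‖u‖ ^ (-β)
      * kernelProfile d α t ‖u - u₁‖)
      ≤ ENNReal.ofReal c * ENNReal.ofReal (‖u - u₀‖ ^ (s - d) * ‖u - u₁‖ ^ (t - d))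
        + ENNReal.ofReal (3 ^ ((d : ℝ) - s))
          * ENNReal.ofReal (kernelProfile d α t ‖u - u₁‖ * japaneseBracket ‖u‖ ^ (-β)) := by
    intro u
    have := japaneseBracket_pos ‖u‖
    have := kernelProfile_nonneg (d := d) (α := α) (s := t) (norm_nonneg (u - u₁))
    rw [ENNReal.ofReal_mul_add_ofReal_mul (by positivity) (by positivity) (by positivity)
      (by positivity), norm_sub_rev u₀ u]
    exact ENNReal.ofReal_le_ofReal (kernelProfile_mul_mul_kernelProfile_le_of_le_add_one
      (norm_nonneg _) (norm_nonneg _) (by linarith [norm_sub_le_norm_sub_add_norm_sub u u₀ u₁])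
      (by positivity) (japaneseBracket_rpow_le_one (by linarith) _) (by linarith) (by linarith) hαd)
  have hR' := hR u₀ u₁ hne
  rw [← hd, show s - d + (t - d) + d = s + t - d by ring] at hR'
  calc _ ≤ _ := lintegral_mono hpt
    _ = ENNReal.ofReal c * ∫⁻ u, ENNReal.ofReal (‖u - u₀‖ ^ (s - d) * ‖u - u₁‖ ^ (t - d)) ∂μ
        + ENNReal.ofReal (3 ^ ((d : ℝ) - s)) * ∫⁻ u, ENNReal.ofReal
          (kernelProfile d α t ‖u - u₁‖ * japaneseBracket ‖u‖ ^ (-β)) ∂μ := by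
        rw [lintegral_add_left (by fun_prop), lintegral_const_mul' _ _ ENNReal.ofReal_ne_top,
          lintegral_const_mul' _ _ ENNReal.ofReal_ne_top]
    _ ≤ ENNReal.ofReal c * ENNReal.ofReal (R * ‖u₀ - u₁‖ ^ (s + t - d))
        + ENNReal.ofReal (3 ^ ((d : ℝ) - s)) * ENNReal.ofReal M := by
        gcongr
        exact hM u₁
    _ ≤ _ := by
        rw [ENNReal.ofReal_mul_add_ofReal_mul (by positivity) (by positivity) (by positivity)
          (by positivity)]
        refine ENNReal.ofReal_le_ofReal ?_
        have hone : 1 ≤ ‖u₀ - u₁‖ ^ (s + t - d) :=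
          Real.one_le_rpow_of_pos_of_le_one_of_nonpos hr₀ hr (by linarith)
        calc c * (R * ‖u₀ - u₁‖ ^ (s + t - d)) + 3 ^ ((d : ℝ) - s) * M
            ≤ (c * R + 3 ^ ((d : ℝ) - s) * M) * ‖u₀ - u₁‖ ^ (s + t - d) := by
              have := mul_le_mul_of_nonneg_left hone
                (by positivity : (0 : ℝ) ≤ 3 ^ ((d : ℝ) - s) * M)
              linarith
          _ ≤ (c * R + 3 ^ ((d : ℝ) - s) * M)
              * (max 1 (2 ^ (s + t - α)) * kernelProfile d α (s + t) ‖u₀ - u₁‖) := by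
              gcongr; exact rpow_le_kernelProfile hr₀ hr
          _ = _ := by ring

lemma exists_lintegral_kernelProfile_mul_mul_kernelProfile_le_of_one_le_norm {α β s t : ℝ}
    (hs : 0 < s) (ht : 0 < t) (hst : s + t < finrank ℝ E) (hαd : α ≤ finrank ℝ E) (hαβ : α < β)
    (hβ : 0 ≤ β) :
    ∃ C : ℝ, ∀ u₀ u₁ : E, 1 ≤ ‖u₀ - u₁‖ →
      ∫⁻ u, ENNReal.ofReal (kernelProfile (finrank ℝ E) α s ‖u₀ - u‖ * japaneseBracket ‖u‖ ^ (-β)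
        * kernelProfile (finrank ℝ E) α t ‖u - u₁‖) ∂μ
        ≤ ENNReal.ofReal (C * kernelProfile (finrank ℝ E) α (s + t) ‖u₀ - u₁‖) := by
  set d : ℕ := finrank ℝ E
  obtain ⟨Ms, hMs⟩ := exists_lintegral_kernelProfile_mul_japaneseBracket_rpow_le (μ := μ) hs
    (by linarith) hαd hαβ hβ
  obtain ⟨Mt, hMt⟩ := exists_lintegral_kernelProfile_mul_japaneseBracket_rpow_le (μ := μ) ht
    (by linarith) hαd hαβ hβ
  refine ⟨(3 ^ ((d : ℝ) - t) * Ms + 3 ^ ((d : ℝ) - s) * Mt) * 2 ^ ((d : ℝ) - α),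
    fun u₀ u₁ hr => ?_⟩
  set ρ := ‖u₀ - u₁‖ / 2 with hρ_def
  have := japaneseBracket_pos ρ
  have hpt : ∀ u, ENNReal.ofReal (kernelProfile d α s ‖u₀ - u‖ * japaneseBracket ‖u‖ ^ (-β)
      * kernelProfile d α t ‖u - u₁‖)
      ≤ ENNReal.ofReal (3 ^ ((d : ℝ) - t) * japaneseBracket ρ ^ (α - d))
          * ENNReal.ofReal (kernelProfile d α s ‖u - u₀‖ * japaneseBracket ‖u‖ ^ (-β))
        + ENNReal.ofReal (3 ^ ((d : ℝ) - s) * japaneseBracket ρ ^ (α - d))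
          * ENNReal.ofReal (kernelProfile d α t ‖u - u₁‖ * japaneseBracket ‖u‖ ^ (-β)) := by
    intro u
    have := japaneseBracket_pos ‖u‖
    have := kernelProfile_nonneg (d := d) (α := α) (s := s) (norm_nonneg (u - u₀))
    have := kernelProfile_nonneg (d := d) (α := α) (s := t) (norm_nonneg (u - u₁))
    rw [ENNReal.ofReal_mul_add_ofReal_mul (by positivity) (by positivity) (by positivity)
      (by positivity), norm_sub_rev u₀ u]
    exact ENNReal.ofReal_le_ofReal (kernelProfile_mul_mul_kernelProfile_le_of_two_mul_le_add
      (norm_nonneg _) (norm_nonneg _) (by linarith)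
      (by linarith [norm_sub_le_norm_sub_add_norm_sub u₀ u u₁, norm_sub_rev u₀ u])
      (by positivity) (by linarith) (by linarith) hαd)
  have hhalf : japaneseBracket ρ ^ (α - d)
      ≤ 2 ^ ((d : ℝ) - α) * japaneseBracket ‖u₀ - u₁‖ ^ (α - d) := by
    have := japaneseBracket_half_rpow_le (p := α - d) (by linarith) ‖u₀ - u₁‖
    rwa [neg_sub] at this
  calc _ ≤ _ := lintegral_mono hpt
    _ = ENNReal.ofReal (3 ^ ((d : ℝ) - t) * japaneseBracket ρ ^ (α - d)) * ∫⁻ u, ENNReal.ofReal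
          (kernelProfile d α s ‖u - u₀‖ * japaneseBracket ‖u‖ ^ (-β)) ∂μ
        + ENNReal.ofReal (3 ^ ((d : ℝ) - s) * japaneseBracket ρ ^ (α - d)) * ∫⁻ u, ENNReal.ofReal
          (kernelProfile d α t ‖u - u₁‖ * japaneseBracket ‖u‖ ^ (-β)) ∂μ := by
        rw [lintegral_add_left (by fun_prop), lintegral_const_mul' _ _ ENNReal.ofReal_ne_top,
          lintegral_const_mul' _ _ ENNReal.ofReal_ne_top]
    _ ≤ ENNReal.ofReal (3 ^ ((d : ℝ) - t) * japaneseBracket ρ ^ (α - d)) * ENNReal.ofReal Ms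
        + ENNReal.ofReal (3 ^ ((d : ℝ) - s) * japaneseBracket ρ ^ (α - d)) * ENNReal.ofReal Mt := by
        gcongr
        exacts [hMs u₀, hMt u₁]
    _ ≤ _ := by
        rw [ENNReal.ofReal_mul_add_ofReal_mul (by positivity) (by positivity) (by positivity)
          (by positivity)]
        refine ENNReal.ofReal_le_ofReal ?_
        calc 3 ^ ((d : ℝ) - t) * japaneseBracket ρ ^ (α - d) * Ms
              + 3 ^ ((d : ℝ) - s) * japaneseBracket ρ ^ (α - d) * Mt
            = (3 ^ ((d : ℝ) - t) * Ms + 3 ^ ((d : ℝ) - s) * Mt) * japaneseBracket ρ ^ (α - d) := by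
              ring
          _ ≤ (3 ^ ((d : ℝ) - t) * Ms + 3 ^ ((d : ℝ) - s) * Mt)
              * (2 ^ ((d : ℝ) - α) * kernelProfile d α (s + t) ‖u₀ - u₁‖) := by
              gcongr
              refine hhalf.trans ?_
              gcongr
              exact japaneseBracket_rpow_le_kernelProfile (by linarith) hst.le
          _ = _ := by ring

theorem exists_integral_kernelProfile_mul_mul_kernelProfile_le {α β s t : ℝ}
    (hs : 0 < s) (ht : 0 < t) (hst : s + t < finrank ℝ E) (hαd : α ≤ finrank ℝ E) (hαβ : α < β)
    (hβ : 0 ≤ β) :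
    ∃ C > 0, ∀ u₀ u₁ : E, u₀ ≠ u₁ →
      ∫ u, kernelProfile (finrank ℝ E) α s ‖u₀ - u‖ * japaneseBracket ‖u‖ ^ (-β)
        * kernelProfile (finrank ℝ E) α t ‖u - u₁‖ ∂μ
        ≤ C * kernelProfile (finrank ℝ E) α (s + t) ‖u₀ - u₁‖ := by
  obtain ⟨C₁, hnear⟩ := exists_lintegral_kernelProfile_mul_mul_kernelProfile_le_of_norm_le_one
    (μ := μ) hs ht hst hαd hαβ hβ
  obtain ⟨C₂, hfar⟩ := exists_lintegral_kernelProfile_mul_mul_kernelProfile_le_of_one_le_norm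
    (μ := μ) hs ht hst hαd hαβ hβ
  refine ⟨max (max C₁ C₂) 1, by positivity, fun u₀ u₁ hne => ?_⟩
  have hK := kernelProfile_nonneg (d := finrank ℝ E) (α := α) (s := s + t) (norm_nonneg (u₀ - u₁))
  have hlin : ∫⁻ u, ENNReal.ofReal (kernelProfile (finrank ℝ E) α s ‖u₀ - u‖
      * japaneseBracket ‖u‖ ^ (-β) * kernelProfile (finrank ℝ E) α t ‖u - u₁‖) ∂μ
      ≤ ENNReal.ofReal (max (max C₁ C₂) 1 * kernelProfile (finrank ℝ E) α (s + t) ‖u₀ - u₁‖) := by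
    rcases le_total ‖u₀ - u₁‖ 1 with hr | hr
    · exact (hnear u₀ u₁ hne hr).trans (ENNReal.ofReal_le_ofReal (by gcongr; simp))
    · exact (hfar u₀ u₁ hr).trans (ENNReal.ofReal_le_ofReal (by gcongr; simp))
  rw [integral_eq_lintegral_of_nonneg_ae (.of_forall fun u => ?_)
    (by fun_prop : Measurable _).aestronglyMeasurable]
  · exact ENNReal.toReal_le_of_le_ofReal (by positivity) hlin
  · have := japaneseBracket_pos ‖u‖
    have := kernelProfile_nonneg (d := finrank ℝ E) (α := α) (s := s) (norm_nonneg (u₀ - u))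
    have := kernelProfile_nonneg (d := finrank ℝ E) (α := α) (s := t) (norm_nonneg (u - u₁))
    positivity

end Integrals

theorem stmt_16 (n m a : ℕ) (hn : 1 ≤ n) (hm : 1 ≤ m) (ha : 1 ≤ a)
    (hna : 2 * m * (a + 1) < n) (δ : ℝ) (hδ : 0 < δ) :
    ∃ C > 0, ∀ u₀ u₁ : EuclideanSpace ℝ (Fin n), u₀ ≠ u₁ →
      (∫ u : EuclideanSpace ℝ (Fin n),
          (Real.sqrt (1 + ‖u₀ - u‖ ^ 2) ^ (((n : ℝ) + 1) / 2 - 2 * m * a) /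
              ‖u₀ - u‖ ^ ((n : ℝ) - 2 * m * a)) *
            Real.sqrt (1 + ‖u‖ ^ 2) ^ (-(((n : ℝ) + 1) / 2) - δ) *
              (Real.sqrt (1 + ‖u - u₁‖ ^ 2) ^ (((n : ℝ) + 1) / 2 - 2 * m) /
                ‖u - u₁‖ ^ ((n : ℝ) - 2 * m)))
        ≤ C * Real.sqrt (1 + ‖u₀ - u₁‖ ^ 2) ^ (((n : ℝ) + 1) / 2 - 2 * m * (a + 1)) /
            ‖u₀ - u₁‖ ^ ((n : ℝ) - 2 * m * (a + 1)) := by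
  have hm' : (1 : ℝ) ≤ m := by exact_mod_cast hm
  have ha' : (1 : ℝ) ≤ a := by exact_mod_cast ha
  have hn' : (1 : ℝ) ≤ n := by exact_mod_cast hn
  have hna' : 2 * (m : ℝ) * (a + 1) < n := by exact_mod_cast hna
  obtain ⟨C, hC, hbound⟩ := exists_integral_kernelProfile_mul_mul_kernelProfile_le
    (μ := (volume : Measure (EuclideanSpace ℝ (Fin n)))) (α := ((n : ℝ) + 1) / 2)
    (β := ((n : ℝ) + 1) / 2 + δ) (s := 2 * m * a) (t := 2 * m) (by positivity) (by positivity)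
    (by rw [finrank_euclideanSpace_fin]; linarith) (by rw [finrank_euclideanSpace_fin]; linarith)
    (by linarith) (by positivity)
  refine ⟨C, hC, fun u₀ u₁ hne => ?_⟩
  have h := hbound u₀ u₁ hne
  simp only [finrank_euclideanSpace_fin, kernelProfile, japaneseBracket] at h
  rwa [neg_add', show 2 * (m : ℝ) * a + 2 * m = 2 * m * (a + 1) by ring, ← mul_div_assoc] at h
end

section
/- There exists an absolute constant C > 0 such that the following holds. Let K : [0,∞) → ℂ be continuously differentiable with K integrable on (0,∞), and set M₀(s) := sup_{s ≤ ρ ≤ s+1} |K(ρ)| and M₁(s) := sup_{s ≤ ρ ≤ s+1} |K′(ρ)|. If sup_{0 < s ≤ 1} |K(s)| < ∞ and ∫₀^∞ M₀(s)^{1/2} M₁(s)^{1/2} ds < ∞, then for every t ≥ 2π, |∫₀^∞ e^{−ist/2} K(s) ds| ≤ C t^{−1/2} ( sup_{0 < s ≤ 1} |K(s)| + ∫₀^∞ M₀(s)^{1/2} M₁(s)^{1/2} ds ). -/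
open MeasureTheory Real Set

/-! With `h = 2π / t` the phase `e s = exp (-i s t / 2)` satisfies `e (s + h) = -e s`, so shifting
the integral by `h` gives `2 ∫₀^∞ e K = ∫₀^h e K + ∫₀^∞ e s (K s - K (s + h))`. The first term is at
most `h sup_{(0,1]} ‖K‖`. In the second, `‖K s - K (s + h)‖` is bounded both by `2 M₀ s` and by
`h M₁ s`, hence by `√(2h M₀ s M₁ s)`. Finally `h ≤ √(2h) = 2 √π t^(-1/2)`, so `C = √π` works. -/

section Shift

variable {E : Type*} [NormedAddCommGroup E]

theorem integrableOn_Ioi_comp_add_right {f : ℝ → E} {a : ℝ} (h : ℝ)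
    (hf : IntegrableOn f (Ioi (a + h))) : IntegrableOn (fun s => f (s + h)) (Ioi a) := by
  have := (measurePreserving_add_right volume h).integrableOn_comp_preimage
    (measurableEmbedding_addRight h) (f := f) (s := Ioi (a + h))
  rw [preimage_add_const_Ioi, add_sub_cancel_right] at this
  exact this.2 hf

variable [NormedSpace ℝ E]

theorem setIntegral_Ioi_comp_add_right (f : ℝ → E) (a h : ℝ) :
    ∫ s in Ioi a, f (s + h) = ∫ s in Ioi (a + h), f s := by
  have := (measurePreserving_add_right volume h).setIntegral_preimage_emb
    (measurableEmbedding_addRight h) f (Ioi (a + h))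
  rwa [preimage_add_const_Ioi, add_sub_cancel_right] at this

theorem setIntegral_Ioi_eq_Ioc_add_comp_add_right {f : ℝ → E} {a h : ℝ} (hh : 0 ≤ h)
    (hf : IntegrableOn f (Ioi a)) :
    ∫ s in Ioi a, f s = (∫ s in Ioc a (a + h), f s) + ∫ s in Ioi a, f (s + h) := by
  have ha : a ≤ a + h := le_add_of_nonneg_right hh
  rw [setIntegral_Ioi_comp_add_right, ← setIntegral_union (Ioc_disjoint_Ioi le_rfl)
    measurableSet_Ioi (hf.mono_set Ioc_subset_Ioi_self) (hf.mono_set (Ioi_subset_Ioi ha)),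
    Ioc_union_Ioi_eq_Ioi ha]

end Shift

section Antiperiodic

variable {E : Type*} [NormedAddCommGroup E] [NormedSpace ℂ E] {e : ℝ → ℂ} {K : ℝ → E} {a h : ℝ}

theorem two_smul_setIntegral_Ioi_of_antiperiodic (he : Function.Antiperiodic e h) (hh : 0 ≤ h)
    (hf : IntegrableOn (fun s => e s • K s) (Ioi a)) :
    (2 : ℝ) • ∫ s in Ioi a, e s • K s =
      (∫ s in Ioc a (a + h), e s • K s) + ∫ s in Ioi a, e s • (K s - K (s + h)) := by
  have hshift : ∀ s, e (s + h) • K (s + h) = -(e s • K (s + h)) := fun s => by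
    rw [he s, neg_smul]
  have hg : IntegrableOn (fun s => e s • K (s + h)) (Ioi a) := by
    simpa only [hshift, Pi.neg_def, neg_neg] using
      (integrableOn_Ioi_comp_add_right h (hf.mono_set (Ioi_subset_Ioi
        (le_add_of_nonneg_right hh)))).neg
  have hsplit := setIntegral_Ioi_eq_Ioc_add_comp_add_right hh hf
  simp only [hshift, integral_neg] at hsplit
  simp only [smul_sub]
  rw [integral_sub hf hg, two_smul]
  nth_rewrite 1 [hsplit]
  abel

theorem two_mul_norm_setIntegral_Ioi_le_of_antiperiodic (he : Function.Antiperiodic e h)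
    (hh : 0 ≤ h) (he_meas : AEStronglyMeasurable e) (he_norm : ∀ s, ‖e s‖ = 1)
    (hK : IntegrableOn K (Ioi a)) :
    2 * ‖∫ s in Ioi a, e s • K s‖ ≤
      (∫ s in Ioc a (a + h), ‖K s‖) + ∫ s in Ioi a, ‖K s - K (s + h)‖ := by
  have hf : IntegrableOn (fun s => e s • K s) (Ioi a) :=
    hK.bdd_smul 1 he_meas.restrict (.of_forall fun s => (he_norm s).le)
  calc 2 * ‖∫ s in Ioi a, e s • K s‖ = ‖(2 : ℝ) • ∫ s in Ioi a, e s • K s‖ := by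
        rw [norm_smul, Real.norm_two]
    _ ≤ ‖∫ s in Ioc a (a + h), e s • K s‖ + ‖∫ s in Ioi a, e s • (K s - K (s + h))‖ := by
        rw [two_smul_setIntegral_Ioi_of_antiperiodic he hh hf]
        exact norm_add_le _ _
    _ ≤ (∫ s in Ioc a (a + h), ‖e s • K s‖) + ∫ s in Ioi a, ‖e s • (K s - K (s + h))‖ :=
        add_le_add (norm_integral_le_integral_norm _) (norm_integral_le_integral_norm _)
    _ = (∫ s in Ioc a (a + h), ‖K s‖) + ∫ s in Ioi a, ‖K s - K (s + h)‖ := by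
        simp only [norm_smul, he_norm, one_mul]

end Antiperiodic

theorem antiperiodic_cexp_neg_I_mul {t : ℝ} (ht : t ≠ 0) :
    Function.Antiperiodic (fun s : ℝ => Complex.exp (-Complex.I * s * t / 2)) (2 * π / t) := by
  intro s
  have ht' : (t : ℂ) ≠ 0 := by exact_mod_cast ht
  have harg :
      -Complex.I * ↑(s + 2 * π / t) * t / 2 = -Complex.I * s * t / 2 + -(π * Complex.I) := by
    push_cast
    field_simp
    ring
  simp only [harg, Complex.exp_add, Complex.exp_neg, Complex.exp_pi_mul_I, inv_neg, inv_one,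
    mul_neg_one]

noncomputable def localSup (F : ℝ → ℝ) (s : ℝ) : ℝ := sSup (F '' Icc s (s + 1))

theorem le_localSup {F : ℝ → ℝ} {s ρ : ℝ} (hF : ContinuousOn F (Icc s (s + 1)))
    (hρ : ρ ∈ Icc s (s + 1)) : F ρ ≤ localSup F s :=
  le_csSup (isCompact_Icc.bddAbove_image hF) (mem_image_of_mem F hρ)

theorem le_sqrt_mul_sqrt_of_le_of_le {x a b : ℝ} (hx : 0 ≤ x) (ha : x ≤ a) (hb : x ≤ b) :
    x ≤ √a * √b := by
  rw [← Real.sqrt_mul (hx.trans ha), ← Real.sqrt_mul_self hx]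
  exact Real.sqrt_le_sqrt (mul_le_mul ha hb hx (hx.trans ha))

theorem norm_sub_apply_add_le_sqrt_localSup {E : Type*} [NormedAddCommGroup E] [NormedSpace ℝ E]
    {K : ℝ → E} {a s h : ℝ} (hK : ContDiffOn ℝ 1 K (Ici a)) (hs : a ≤ s) (h0 : 0 ≤ h) (h1 : h ≤ 1) :
    ‖K s - K (s + h)‖ ≤
      √(2 * h) * (√(localSup (‖K ·‖) s) * √(localSup (‖derivWithin K (Ici a) ·‖) s)) := by
  have hsub : Icc s (s + 1) ⊆ Ici a := fun x hx => hs.trans hx.1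
  have hmem : s + h ∈ Icc s (s + 1) := ⟨by linarith, by linarith⟩
  have hvalue : ∀ ρ ∈ Icc s (s + 1), ‖K ρ‖ ≤ localSup (‖K ·‖) s :=
    fun ρ => le_localSup (hK.continuousOn.mono hsub).norm
  have hderiv : ∀ ρ ∈ Icc s (s + 1), ‖derivWithin K (Ici a) ρ‖ ≤
      localSup (‖derivWithin K (Ici a) ·‖) s :=
    fun ρ => le_localSup ((hK.continuousOn_derivWithin (uniqueDiffOn_Ici a) le_rfl).mono hsub).norm
  have hbound₀ : ‖K s - K (s + h)‖ ≤ 2 * localSup (‖K ·‖) s := by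
    calc ‖K s - K (s + h)‖ ≤ ‖K s‖ + ‖K (s + h)‖ := norm_sub_le _ _
      _ ≤ 2 * localSup (‖K ·‖) s := by
        linarith [hvalue s (left_mem_Icc.2 (by linarith)), hvalue (s + h) hmem]
  have hbound₁ : ‖K s - K (s + h)‖ ≤ h * localSup (‖derivWithin K (Ici a) ·‖) s := by
    have hK' : ∀ x ∈ Icc s (s + 1),
        HasDerivWithinAt K (derivWithin K (Ici a) x) (Icc s (s + 1)) x :=
      fun x hx => ((hK.differentiableOn one_ne_zero x (hsub hx)).hasDerivWithinAt).mono hsub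
    have := norm_image_sub_le_of_norm_deriv_le_segment' hK'
      (fun x hx => hderiv x (Ico_subset_Icc_self hx)) (s + h) hmem
    rw [norm_sub_rev, add_sub_cancel_left] at this
    linarith
  calc ‖K s - K (s + h)‖
        ≤ √(2 * localSup (‖K ·‖) s) * √(h * localSup (‖derivWithin K (Ici a) ·‖) s) :=
        le_sqrt_mul_sqrt_of_le_of_le (norm_nonneg _) hbound₀ hbound₁
    _ = _ := by
        rw [Real.sqrt_mul zero_le_two, Real.sqrt_mul h0, Real.sqrt_mul zero_le_two]
        ring

theorem setIntegral_Ioc_norm_le_mul_sSup {E : Type*} [NormedAddCommGroup E] {K : ℝ → E} {h : ℝ}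
    (h0 : 0 ≤ h) (h1 : h ≤ 1) (hK : BddAbove ((‖K ·‖) '' Ioc 0 1)) :
    ∫ s in Ioc 0 h, ‖K s‖ ≤ sSup ((‖K ·‖) '' Ioc 0 1) * h := by
  have := norm_setIntegral_le_of_norm_le_const (μ := volume) measure_Ioc_lt_top
    fun s (hs : s ∈ Ioc 0 h) => (norm_norm (K s)).trans_le
      (le_csSup hK ⟨s, ⟨hs.1, hs.2.trans h1⟩, rfl⟩)
  simpa [Real.volume_real_Ioc, h0] using (Real.le_norm_self _).trans this

theorem le_sqrt_two_mul_self {h : ℝ} (h0 : 0 ≤ h) (h1 : h ≤ 1) : h ≤ √(2 * h) :=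
  Real.le_sqrt_of_sq_le (by nlinarith)

theorem sqrt_two_mul_two_pi_div {t : ℝ} (ht : 0 < t) :
    √(2 * (2 * π / t)) = 2 * √π * t ^ (-(1 : ℝ) / 2) := by
  rw [show 2 * (2 * π / t) = 2 ^ 2 * π / t by ring, Real.sqrt_div' _ ht.le,
    Real.sqrt_mul (by norm_num), Real.sqrt_sq zero_le_two, neg_div, Real.rpow_neg ht.le,
    ← Real.sqrt_eq_rpow, div_eq_mul_inv]

theorem stmt_17 :
    ∃ C > 0, ∀ K : ℝ → ℂ,
      ContDiffOn ℝ 1 K (Set.Ici 0) →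
      IntegrableOn K (Set.Ioi 0) →
      BddAbove ((fun s => ‖K s‖) '' Set.Ioc 0 1) →
      IntegrableOn
        (fun s => (sSup ((fun ρ => ‖K ρ‖) '' Set.Icc s (s + 1))) ^ ((1 : ℝ) / 2) *
          (sSup ((fun ρ => ‖derivWithin K (Set.Ici 0) ρ‖) '' Set.Icc s (s + 1))) ^ ((1 : ℝ) / 2))
        (Set.Ioi 0) →
      ∀ t : ℝ, 2 * Real.pi ≤ t →
        ‖∫ s in Set.Ioi (0 : ℝ), Complex.exp (-Complex.I * s * t / 2) * K s‖ ≤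
          C * t ^ (-(1 : ℝ) / 2) *
            (sSup ((fun s => ‖K s‖) '' Set.Ioc 0 1) +
              ∫ s in Set.Ioi (0 : ℝ),
                (sSup ((fun ρ => ‖K ρ‖) '' Set.Icc s (s + 1))) ^ ((1 : ℝ) / 2) *
                  (sSup ((fun ρ => ‖derivWithin K (Set.Ici 0) ρ‖) '' Set.Icc s (s + 1))) ^
                    ((1 : ℝ) / 2)) := by
  refine ⟨√π, Real.sqrt_pos.2 pi_pos, fun K hK hKint hbdd hMint t ht => ?_⟩
  simp only [← Real.sqrt_eq_rpow] at hMint ⊢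
  have ht0 : 0 < t := by linarith [pi_pos]
  have key := two_mul_norm_setIntegral_Ioi_le_of_antiperiodic
    (antiperiodic_cexp_neg_I_mul ht0.ne') (by positivity)
    (by fun_prop : Continuous _).aestronglyMeasurable (fun s => by simp [Complex.norm_exp]) hKint
  simp only [smul_eq_mul, zero_add] at key
  set h := 2 * π / t with h_def
  have h0 : 0 ≤ h := by positivity
  have h1 : h ≤ 1 := (div_le_one ht0).2 ht
  have hc : h ≤ 2 * √π * t ^ (-(1 : ℝ) / 2) :=
    sqrt_two_mul_two_pi_div ht0 ▸ le_sqrt_two_mul_self h0 h1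
  set S := sSup ((fun s => ‖K s‖) '' Ioc 0 1)
  set Iv := ∫ s in Ioi 0, √(sSup ((fun ρ => ‖K ρ‖) '' Icc s (s + 1))) *
    √(sSup ((fun ρ => ‖derivWithin K (Ici 0) ρ‖) '' Icc s (s + 1))) with Iv_def
  have hS : 0 ≤ S := (norm_nonneg _).trans (le_csSup hbdd ⟨1, ⟨one_pos, le_rfl⟩, rfl⟩)
  have htail : ∫ s in Ioi 0, ‖K s - K (s + h)‖ ≤ √(2 * h) * Iv := by
    rw [Iv_def, ← integral_const_mul]
    refine integral_mono_of_nonneg (.of_forall fun s => norm_nonneg _) (hMint.const_mul _) ?_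
    filter_upwards [ae_restrict_mem measurableSet_Ioi] with s hs
    exact norm_sub_apply_add_le_sqrt_localSup hK hs.le h0 h1
  rw [h_def, sqrt_two_mul_two_pi_div ht0] at htail
  linarith [mul_le_mul_of_nonneg_right hc hS, setIntegral_Ioc_norm_le_mul_sSup h0 h1 hbdd]
end

section
/- Let n and m be positive integers with m ≥ 2, let M ≥ 0 be an integer, and let A > 0. Suppose g : [0,∞) → ℂ is (M + 2m − 2)-times continuously differentiable, g^{(j)}(0) = 0 for 0 ≤ j ≤ 2m − 3, and |g^{(N)}(r)| ≤ A ⟨r⟩^{(n−3)/2 − N} for all r ≥ 0 and 0 ≤ N ≤ M + 2m − 2. Then the function F(r) := g(r)/r^{2m−2}, defined for r > 0, satisfies: there exists C > 0 (depending only on n, m, M, A) such that |F^{(N)}(r)| ≤ C ⟨r⟩^{(n+1)/2 − 2m − N} for all r > 0 and 0 ≤ N ≤ M. -/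
/-!
Dividing by `r` one factor at a time: the `N`-th derivative of `h(x)/x` at `r` is
`-N! P / (-r)^(N+1)`, where `P` is the value at `0` of the degree-`N` Taylor polynomial of `h`
at `r`. For `r ≥ 1` this Taylor polynomial is bounded termwise by `(N+1) C ⟨r⟩^e`, so each
division costs one power of `⟨r⟩`. For `r ≤ 1` its derivative in the base point is
`r^N h^(N+1)(r) / N!`, and it tends to `0` at `0+`, so integrating from `0` gains the power of
`r` that absorbs `r^(-N-1)`. Near `0` the vanishing of `g^(j)(0)` for `j < 2m - 2` gives
`|g^(N)(r)| ≲ r^(2m-2-N)`, which survives `2m - 2` divisions as boundedness.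
-/

open Real Set
open Filter Topology
open scoped Nat

lemma iteratedDerivWithin_Ici_eq_Ioi {E : Type*} [NormedAddCommGroup E] [NormedSpace ℝ E]
    (f : ℝ → E) (N : ℕ) {r : ℝ} (hr : 0 < r) :
    iteratedDerivWithin N f (Ici 0) r = iteratedDerivWithin N f (Ioi 0) r := by
  have hset : Ici (0 : ℝ) =ᶠ[𝓝 r] Ioi 0 := by
    filter_upwards [Ioi_mem_nhds hr] with x hx
    exact propext (iff_of_true (mem_Ioi.1 hx).le hx)
  simp only [iteratedDerivWithin, iteratedFDerivWithin_congr_set hset]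

lemma norm_le_mul_of_tendsto_zero_of_norm_deriv_le {E : Type*} [NormedAddCommGroup E]
    [NormedSpace ℝ E] {f f' : ℝ → E} {r B : ℝ} (hr : 0 < r)
    (hf : ∀ t ∈ Ioc 0 r, HasDerivAt f (f' t) t) (hf' : ∀ t ∈ Ioc 0 r, ‖f' t‖ ≤ B)
    (hf0 : Tendsto f (𝓝[>] 0) (𝓝 0)) : ‖f r‖ ≤ B * r := by
  have hstep : ∀ ε ∈ Ioc 0 r, ‖f r‖ ≤ ‖f ε‖ + B * (r - ε) := by
    rintro ε ⟨hε0, hεr⟩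
    have hmvt := norm_image_sub_le_of_norm_deriv_le_segment'
      (fun t ht => (hf t ⟨hε0.trans_le ht.1, ht.2⟩).hasDerivWithinAt)
      (fun t ht => hf' t ⟨hε0.trans_le ht.1, ht.2.le⟩) r (right_mem_Icc.2 hεr)
    calc ‖f r‖ ≤ ‖f ε‖ + ‖f r - f ε‖ := norm_le_norm_add_norm_sub' _ _
      _ ≤ ‖f ε‖ + B * (r - ε) := by gcongr
  have hlim : Tendsto (fun ε => ‖f ε‖ + B * (r - ε)) (𝓝[>] 0) (𝓝 (‖(0 : E)‖ + B * (r - 0))) :=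
    hf0.norm.add
      ((tendsto_const_nhds.sub (tendsto_nhdsWithin_of_tendsto_nhds tendsto_id)).const_mul B)
  simp only [norm_zero, zero_add, sub_zero] at hlim
  exact ge_of_tendsto hlim (eventually_of_mem (Ioc_mem_nhdsGT hr) hstep)

lemma norm_taylorWithinEval_zero_le {E : Type*} [NormedAddCommGroup E] [NormedSpace ℝ E]
    (h : ℝ → E) (N : ℕ) (s : Set ℝ) {r : ℝ} (hr : 0 ≤ r) :
    ‖taylorWithinEval h N s r 0‖ ≤
      ∑ k ∈ Finset.range (N + 1), r ^ k * ‖iteratedDerivWithin k h s r‖ := by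
  rw [taylor_within_apply]
  refine (norm_sum_le _ _).trans (Finset.sum_le_sum fun k _ => ?_)
  rw [norm_smul, norm_mul, norm_inv, norm_pow, zero_sub, norm_neg, Real.norm_of_nonneg hr,
    Real.norm_natCast]
  have : (k ! : ℝ)⁻¹ ≤ 1 := inv_le_one_of_one_le₀ (mod_cast k.factorial_pos)
  calc (k ! : ℝ)⁻¹ * r ^ k * ‖iteratedDerivWithin k h s r‖
      ≤ 1 * r ^ k * ‖iteratedDerivWithin k h s r‖ := by gcongr
    _ = _ := by rw [one_mul]

section DivisionByX

variable {h : ℝ → ℂ}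

lemma hasDerivAt_taylorWithinEval_Ioi {K N : ℕ} (hh : ContDiffOn ℝ K h (Ioi 0)) (hN : N < K)
    (x : ℝ) {r : ℝ} (hr : 0 < r) :
    HasDerivAt (fun t => taylorWithinEval h N (Ioi 0) t x)
      (((N ! : ℝ)⁻¹ * (x - r) ^ N) • iteratedDerivWithin (N + 1) h (Ioi 0) r) r :=
  (hasDerivWithinAt_taylorWithinEval (uniqueDiffOn_Ioi 0) self_mem_nhdsWithin hr subset_rfl
    (hh.of_le (mod_cast hN.le))
    (hh.differentiableOn_iteratedDerivWithin (mod_cast hN) (uniqueDiffOn_Ioi 0) r hr)).hasDerivAt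
    (Ioi_mem_nhds hr)

theorem iteratedDerivWithin_div_id {N : ℕ} (hh : ContDiffOn ℝ N h (Ioi 0)) {r : ℝ} (hr : 0 < r) :
    iteratedDerivWithin N (fun x : ℝ => h x / x) (Ioi 0) r
      = -N ! * taylorWithinEval h N (Ioi 0) r 0 / (-r : ℂ) ^ (N + 1) := by
  induction N generalizing r with
  | zero => simp
  | succ N ih =>
    have hloc : iteratedDerivWithin N (fun x : ℝ => h x / x) (Ioi 0) =ᶠ[𝓝 r]
        fun t => -N ! * taylorWithinEval h N (Ioi 0) t 0 / (-t : ℂ) ^ (N + 1) :=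
      eventually_of_mem (Ioi_mem_nhds hr) fun t ht => ih hh.of_succ ht
    have hP := (hasDerivAt_taylorWithinEval_Ioi hh N.lt_succ_self 0 hr).const_mul
      (-N ! : ℂ)
    have hpow : HasDerivAt (fun t : ℝ => (-t : ℂ) ^ (N + 1)) ((N + 1 : ℕ) * (-r : ℂ) ^ N * -1) r :=
      ((hasDerivAt_id (r : ℂ)).neg.comp_ofReal).pow (N + 1)
    have hr' : (-r : ℂ) ≠ 0 := neg_ne_zero.2 (mod_cast hr.ne')
    have hfac : (N ! : ℂ) ≠ 0 := mod_cast N.factorial_ne_zero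
    rw [iteratedDerivWithin_succ, derivWithin_of_isOpen isOpen_Ioi hr, hloc.deriv_eq,
      (hP.fun_div hpow (pow_ne_zero _ hr')).deriv, taylorWithinEval_succ, Complex.real_smul,
      Complex.real_smul]
    push_cast [Nat.factorial_succ]
    field_simp
    ring

lemma norm_iteratedDerivWithin_div_id {N : ℕ} (hh : ContDiffOn ℝ N h (Ioi 0)) {r : ℝ}
    (hr : 0 < r) :
    ‖iteratedDerivWithin N (fun x : ℝ => h x / x) (Ioi 0) r‖
      = N ! * ‖taylorWithinEval h N (Ioi 0) r 0‖ / r ^ (N + 1) := by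
  rw [iteratedDerivWithin_div_id hh hr]
  simp [abs_of_pos hr]

end DivisionByX

lemma one_le_sqrt_one_add_sq (r : ℝ) : 1 ≤ √(1 + r ^ 2) :=
  Real.one_le_sqrt.2 (by nlinarith [sq_nonneg r])

lemma sqrt_one_add_sq_le_two {r : ℝ} (hr : |r| ≤ 1) : √(1 + r ^ 2) ≤ 2 := by
  rw [Real.sqrt_le_left zero_le_two]
  nlinarith [sq_abs r, abs_nonneg r]

lemma le_sqrt_one_add_sq (r : ℝ) : r ≤ √(1 + r ^ 2) :=
  (le_abs_self r).trans (Real.abs_le_sqrt (by linarith))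

lemma sqrt_one_add_sq_le_two_mul {r : ℝ} (hr : 1 ≤ r) : √(1 + r ^ 2) ≤ 2 * r := by
  rw [Real.sqrt_le_left (by linarith)]
  nlinarith

def HasSymbolBounds (h : ℝ → ℂ) (K : ℕ) (e : ℝ) : Prop :=
  ∃ C > 0, ∀ N ≤ K, ∀ r : ℝ, 1 ≤ r →
    ‖iteratedDerivWithin N h (Ioi 0) r‖ ≤ C * √(1 + r ^ 2) ^ (e - N)

/-- `q - N` is truncated subtraction: for `N ≥ q` the bound only says that the derivative is
bounded on `(0, 1]`. -/
def HasVanishingBounds (h : ℝ → ℂ) (K q : ℕ) : Prop :=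
  ∃ C > 0, ∀ N ≤ K, ∀ r ∈ Ioc (0 : ℝ) 1,
    ‖iteratedDerivWithin N h (Ioi 0) r‖ ≤ C * r ^ (q - N)

section DivisionBounds

variable {h : ℝ → ℂ} {K : ℕ}

theorem HasSymbolBounds.div_id {e : ℝ} (hh : ContDiffOn ℝ K h (Ioi 0))
    (H : HasSymbolBounds h K e) : HasSymbolBounds (fun x : ℝ => h x / x) K (e - 1) := by
  obtain ⟨C, hC, hb⟩ := H
  refine ⟨K ! * (K + 1) * 2 ^ (K + 1) * C, by positivity, fun N hN r hr => ?_⟩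
  have hr0 : 0 < r := one_pos.trans_le hr
  set s := √(1 + r ^ 2)
  have hs0 : 0 < s := one_pos.trans_le (one_le_sqrt_one_add_sq r)
  have hP : ‖taylorWithinEval h N (Ioi 0) r 0‖ ≤ (N + 1) * (C * s ^ e) := by
    refine (norm_taylorWithinEval_zero_le h N _ hr0.le).trans ?_
    calc ∑ k ∈ Finset.range (N + 1), r ^ k * ‖iteratedDerivWithin k h (Ioi 0) r‖
        ≤ ∑ k ∈ Finset.range (N + 1), s ^ (k : ℝ) * (C * s ^ (e - k)) := by
          gcongr with k hk
          · rw [Real.rpow_natCast]; exact pow_le_pow_left₀ hr0.le (le_sqrt_one_add_sq r) k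
          · exact hb k (by simp at hk; omega) r hr
      _ = (N + 1) * (C * s ^ e) := by
          simp_rw [mul_left_comm _ C, ← Real.rpow_add hs0, add_sub_cancel]
          simp [mul_left_comm]
  have hpow : s ^ e = s ^ (e - 1 - N) * s ^ (N + 1) := by
    rw [← Real.rpow_natCast, ← Real.rpow_add hs0]; push_cast; ring_nf
  have hs2r : s ^ (N + 1) ≤ 2 ^ (N + 1) * r ^ (N + 1) := by
    rw [← mul_pow]; exact pow_le_pow_left₀ hs0.le (sqrt_one_add_sq_le_two_mul hr) _
  rw [norm_iteratedDerivWithin_div_id (hh.of_le (mod_cast hN)) hr0, div_le_iff₀ (by positivity)]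
  calc N ! * ‖taylorWithinEval h N (Ioi 0) r 0‖
      ≤ N ! * ((N + 1) * (C * (s ^ (e - 1 - N) * s ^ (N + 1)))) := by rw [← hpow]; gcongr
    _ ≤ N ! * ((N + 1) * (C * (s ^ (e - 1 - N) * (2 ^ (N + 1) * r ^ (N + 1))))) := by gcongr
    _ ≤ K ! * ((K + 1) * (C * (s ^ (e - 1 - N) * (2 ^ (K + 1) * r ^ (N + 1))))) := by
        gcongr
        norm_num
    _ = K ! * (K + 1) * 2 ^ (K + 1) * C * s ^ (e - 1 - N) * r ^ (N + 1) := by ring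

lemma tendsto_taylorWithinEval_zero_of_norm_le {N q : ℕ} {C : ℝ} (hC : 0 ≤ C) (hq : 1 ≤ q)
    (hb : ∀ k ≤ N, ∀ r ∈ Ioc (0 : ℝ) 1, ‖iteratedDerivWithin k h (Ioi 0) r‖ ≤ C * r ^ (q - k)) :
    Tendsto (fun t => taylorWithinEval h N (Ioi 0) t 0) (𝓝[>] 0) (𝓝 0) := by
  have hbound : ∀ ε ∈ Ioc (0 : ℝ) 1, ‖taylorWithinEval h N (Ioi 0) ε 0‖ ≤ (N + 1) * (C * ε) := by
    intro ε hε
    refine (norm_taylorWithinEval_zero_le h N _ hε.1.le).trans ?_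
    calc ∑ k ∈ Finset.range (N + 1), ε ^ k * ‖iteratedDerivWithin k h (Ioi 0) ε‖
        ≤ ∑ k ∈ Finset.range (N + 1), C * ε := Finset.sum_le_sum fun k hk => by
          calc ε ^ k * ‖iteratedDerivWithin k h (Ioi 0) ε‖
              ≤ ε ^ k * (C * ε ^ (q - k)) :=
                mul_le_mul_of_nonneg_left (hb k (by simp at hk; omega) ε hε)
                  (pow_nonneg hε.1.le k)
            _ = C * ε ^ (k + (q - k)) := by ring
            _ ≤ C * ε ^ 1 :=
                mul_le_mul_of_nonneg_left (pow_le_pow_of_le_one hε.1.le hε.2 (by omega)) hC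
            _ = C * ε := by rw [pow_one]
      _ = (N + 1) * (C * ε) := by simp
  refine squeeze_zero_norm' (eventually_of_mem (Ioc_mem_nhdsGT one_pos) hbound) ?_
  exact tendsto_nhdsWithin_of_tendsto_nhds
    ((continuous_const.mul (continuous_const.mul continuous_id)).tendsto' 0 0 (by simp))

theorem HasVanishingBounds.div_id {q : ℕ} (hq : 1 ≤ q) (hh : ContDiffOn ℝ (K + 1 : ℕ) h (Ioi 0))
    (H : HasVanishingBounds h (K + 1) q) :
    HasVanishingBounds (fun x : ℝ => h x / x) K (q - 1) := by
  obtain ⟨C, hC, hb⟩ := H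
  refine ⟨C, hC, fun N hN r hr => ?_⟩
  obtain ⟨hr0, hr1⟩ := hr
  have hP0 := tendsto_taylorWithinEval_zero_of_norm_le (N := N) hC.le hq fun k hk => hb k (by omega)
  have hderiv_le : ∀ t ∈ Ioc 0 r,
      ‖((N ! : ℝ)⁻¹ * (0 - t) ^ N) • iteratedDerivWithin (N + 1) h (Ioi 0) t‖
        ≤ (N ! : ℝ)⁻¹ * C * r ^ (N + (q - (N + 1))) := by
    rintro t ⟨ht0, htr⟩
    rw [norm_smul, norm_mul, norm_pow, zero_sub, norm_neg, Real.norm_of_nonneg ht0.le,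
      norm_inv, Real.norm_natCast]
    calc (N ! : ℝ)⁻¹ * t ^ N * ‖iteratedDerivWithin (N + 1) h (Ioi 0) t‖
        ≤ (N ! : ℝ)⁻¹ * t ^ N * (C * t ^ (q - (N + 1))) := by
          gcongr; exact hb (N + 1) (by omega) t ⟨ht0, htr.trans hr1⟩
      _ = (N ! : ℝ)⁻¹ * C * t ^ (N + (q - (N + 1))) := by ring
      _ ≤ (N ! : ℝ)⁻¹ * C * r ^ (N + (q - (N + 1))) := by gcongr
  have hPr := norm_le_mul_of_tendsto_zero_of_norm_deriv_le hr0
    (fun t ht => hasDerivAt_taylorWithinEval_Ioi hh (by omega) 0 ht.1) hderiv_le hP0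
  rw [norm_iteratedDerivWithin_div_id (hh.of_le (mod_cast hN.trans K.le_succ)) hr0,
    div_le_iff₀ (by positivity)]
  calc N ! * ‖taylorWithinEval h N (Ioi 0) r 0‖
      ≤ N ! * ((N ! : ℝ)⁻¹ * C * r ^ (N + (q - (N + 1))) * r) := by gcongr
    _ = C * r ^ (N + (q - (N + 1)) + 1) := by field_simp; ring
    _ = C * r ^ (q - 1 - N) * r ^ (N + 1) := by
        rw [mul_assoc, ← pow_add]; congr 2; omega

lemma contDiffOn_div_ofReal_pow (hh : ContDiffOn ℝ K h (Ioi 0)) (p : ℕ) :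
    ContDiffOn ℝ K (fun x : ℝ => h x / (x : ℂ) ^ p) (Ioi 0) := by
  have hinv : ContDiffOn ℝ K (fun x : ℝ => ((x : ℂ) ^ p)⁻¹) (Ioi 0) :=
    (Complex.ofRealCLM.contDiff.pow p).contDiffOn.inv fun _ hx =>
      pow_ne_zero _ (Complex.ofReal_ne_zero.2 (ne_of_gt hx))
  simpa only [div_eq_mul_inv] using hh.mul hinv

theorem HasSymbolBounds.div_pow {e : ℝ} (hh : ContDiffOn ℝ K h (Ioi 0))
    (H : HasSymbolBounds h K e) (p : ℕ) :
    HasSymbolBounds (fun x : ℝ => h x / (x : ℂ) ^ p) K (e - p) := by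
  induction p with
  | zero => simpa using H
  | succ p ih =>
    have := ih.div_id (contDiffOn_div_ofReal_pow hh p)
    simp_rw [div_div, ← pow_succ, sub_sub] at this
    exact_mod_cast this

theorem HasVanishingBounds.div_pow {q p : ℕ} (hp : p ≤ q) (hh : ContDiffOn ℝ (K + p : ℕ) h (Ioi 0))
    (H : HasVanishingBounds h (K + p) q) :
    HasVanishingBounds (fun x : ℝ => h x / (x : ℂ) ^ p) K (q - p) := by
  induction p generalizing K with
  | zero => simpa using H
  | succ p ih =>
    rw [← add_assoc] at hh H
    have := (ih (K := K + 1) (by omega) (by rwa [add_right_comm]) (by rwa [add_right_comm])).div_id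
      (by omega) (contDiffOn_div_ofReal_pow (hh.of_le (mod_cast (by omega))) p)
    simp_rw [div_div, ← pow_succ, Nat.sub_sub] at this
    exact this

end DivisionBounds

theorem norm_iteratedDerivWithin_le_mul_pow {g : ℝ → ℂ} {K T : ℕ} {C : ℝ} (hTK : T ≤ K)
    (hg : ContDiffOn ℝ K g (Ici 0)) (hg0 : ∀ j < T, iteratedDerivWithin j g (Ici 0) 0 = 0)
    (hb : ∀ N ≤ K, ∀ r ∈ Icc (0 : ℝ) 1, ‖iteratedDerivWithin N g (Ici 0) r‖ ≤ C) :
    ∀ N ≤ K, ∀ r ∈ Icc (0 : ℝ) 1, ‖iteratedDerivWithin N g (Ici 0) r‖ ≤ C * r ^ (T - N) := by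
  have hC : 0 ≤ C := (norm_nonneg _).trans (hb 0 K.zero_le 0 ⟨le_rfl, zero_le_one⟩)
  suffices ∀ d N, T - N = d → N ≤ K → ∀ r ∈ Icc (0 : ℝ) 1,
      ‖iteratedDerivWithin N g (Ici 0) r‖ ≤ C * r ^ d from fun N hN => this _ N rfl hN
  intro d
  induction d with
  | zero =>
    intro N _ hN r hr
    rw [pow_zero, mul_one]
    exact hb N hN r hr
  | succ d ih =>
    intro N hd hN r hr
    have hderiv : ∀ t ∈ Icc 0 r, HasDerivWithinAt (iteratedDerivWithin N g (Ici 0))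
        (iteratedDerivWithin (N + 1) g (Ici 0) t) (Icc 0 r) t := by
      intro t ht
      have hdiff := hg.differentiableOn_iteratedDerivWithin (mod_cast (by omega : N < K))
        (uniqueDiffOn_Ici 0) t ht.1
      rw [iteratedDerivWithin_succ]
      exact hdiff.hasDerivWithinAt.mono Icc_subset_Ici_self
    have hbound : ∀ t ∈ Ico 0 r, ‖iteratedDerivWithin (N + 1) g (Ici 0) t‖ ≤ C * r ^ d :=
      fun t ht => (ih (N + 1) (by omega) (by omega) t ⟨ht.1, ht.2.le.trans hr.2⟩).trans
        (by gcongr; exacts [ht.1, ht.2.le])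
    have hmvt := norm_image_sub_le_of_norm_deriv_le_segment' hderiv hbound r (right_mem_Icc.2 hr.1)
    rw [hg0 N (by omega), sub_zero, sub_zero] at hmvt
    rwa [pow_succ, ← mul_assoc]

lemma rpow_le_two_rpow {s x B : ℝ} (hs1 : 1 ≤ s) (hs2 : s ≤ 2) (hxB : x ≤ B) (hB : 0 ≤ B) :
    s ^ x ≤ 2 ^ B :=
  (Real.rpow_le_rpow_of_exponent_le hs1 hxB).trans (Real.rpow_le_rpow (by linarith) hs2 hB)

theorem HasSymbolBounds.exists_bound {h : ℝ → ℂ} {K : ℕ} {e : ℝ} (Hlarge : HasSymbolBounds h K e)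
    (Hsmall : HasVanishingBounds h K 0) :
    ∃ C > 0, ∀ r : ℝ, 0 < r → ∀ N ≤ K,
      ‖iteratedDerivWithin N h (Ioi 0) r‖ ≤ C * √(1 + r ^ 2) ^ (e - N) := by
  obtain ⟨C₁, hC₁, hlarge⟩ := Hlarge
  obtain ⟨C₂, hC₂, hsmall⟩ := Hsmall
  set B := |e| + K
  refine ⟨C₁ + C₂ * 2 ^ B, by positivity, fun r hr N hN => ?_⟩
  set s := √(1 + r ^ 2)
  rcases le_or_gt 1 r with hr1 | hr1
  · exact (hlarge N hN r hr1).trans (by gcongr; exact le_add_of_nonneg_right (by positivity))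
  have hs1 : 1 ≤ s := one_le_sqrt_one_add_sq r
  have hs0 : 0 < s := one_pos.trans_le hs1
  have hinv : (s ^ (e - N))⁻¹ ≤ 2 ^ B := by
    rw [← Real.rpow_neg hs0.le]
    refine rpow_le_two_rpow hs1 (sqrt_one_add_sq_le_two (abs_le.2 ⟨by linarith, hr1.le⟩)) ?_
      (by positivity)
    linarith [neg_abs_le e, (Nat.cast_le (α := ℝ)).2 hN]
  calc ‖iteratedDerivWithin N h (Ioi 0) r‖ ≤ C₂ := by
        simpa using hsmall N hN r ⟨hr, hr1.le⟩
    _ = C₂ * ((s ^ (e - N))⁻¹ * s ^ (e - N)) := by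
        rw [inv_mul_cancel₀ (Real.rpow_pos_of_pos hs0 _).ne', mul_one]
    _ ≤ (C₁ + C₂ * 2 ^ B) * s ^ (e - N) := by
        rw [← mul_assoc]
        gcongr
        exact (mul_le_mul_of_nonneg_left hinv hC₂.le).trans (le_add_of_nonneg_left hC₁.le)

theorem stmt_18_general (n m : ℕ) (hm : 2 ≤ m) (M : ℕ) (A : ℝ) (hA : 0 < A)
    (g : ℝ → ℂ) (hg : ContDiffOn ℝ (M + 2 * m - 2) g (Set.Ici 0))
    (hg0 : ∀ j : ℕ, j ≤ 2 * m - 3 → iteratedDerivWithin j g (Set.Ici 0) 0 = 0)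
    (hgb : ∀ r : ℝ, 0 ≤ r → ∀ N : ℕ, N ≤ M + 2 * m - 2 →
      ‖iteratedDerivWithin N g (Set.Ici 0) r‖ ≤
        A * Real.sqrt (1 + r ^ 2) ^ (((n : ℝ) - 3) / 2 - N)) :
    ∃ C > 0, ∀ r : ℝ, 0 < r → ∀ N : ℕ, N ≤ M →
      ‖iteratedDerivWithin N (fun ρ : ℝ => g ρ / (ρ : ℂ) ^ (2 * m - 2)) (Set.Ioi 0) r‖ ≤
        C * Real.sqrt (1 + r ^ 2) ^ (((n : ℝ) + 1) / 2 - 2 * m - N) := by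
  set T := 2 * m - 2 with hT
  have hgK : ContDiffOn ℝ (M + T : ℕ) g (Ici 0) := by
    rw [show M + T = M + 2 * m - 2 by omega]; exact_mod_cast hg
  have hsymb : HasSymbolBounds g M (((n : ℝ) - 3) / 2) := ⟨A, hA, fun N hN r hr => by
    rw [← iteratedDerivWithin_Ici_eq_Ioi g N (one_pos.trans_le hr)]
    exact hgb r (by linarith) N (by omega)⟩
  have hvan : HasVanishingBounds g (M + T) T := by
    refine ⟨A * 2 ^ (n : ℝ), by positivity, fun N hN r hr => ?_⟩
    rw [← iteratedDerivWithin_Ici_eq_Ioi g N hr.1]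
    refine norm_iteratedDerivWithin_le_mul_pow (by omega) hgK (fun j hj => hg0 j (by omega))
      (fun N hN r hr => ?_) N hN r (Ioc_subset_Icc_self hr)
    refine (hgb r hr.1 N (by omega)).trans (mul_le_mul_of_nonneg_left ?_ hA.le)
    exact rpow_le_two_rpow (one_le_sqrt_one_add_sq r)
      (sqrt_one_add_sq_le_two (abs_le.2 ⟨by linarith [hr.1], hr.2⟩)) (by linarith) (by positivity)
  have hgK' := hgK.mono Ioi_subset_Ici_self
  have hvanF := hvan.div_pow le_rfl hgK'
  rw [Nat.sub_self] at hvanF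
  obtain ⟨C, hC, hF⟩ :=
    (hsymb.div_pow (hgK'.of_le (mod_cast M.le_add_right T)) T).exists_bound hvanF
  refine ⟨C, hC, fun r hr N hN => ?_⟩
  rw [show ((n : ℝ) + 1) / 2 - 2 * m - N = (n - 3) / 2 - T - N by
    rw [hT, Nat.cast_sub (by omega)]; push_cast; ring]
  exact hF r hr N hN

theorem stmt_18 (n m : ℕ) (hn : 1 ≤ n) (hm : 2 ≤ m) (M : ℕ) (A : ℝ) (hA : 0 < A)
    (g : ℝ → ℂ) (hg : ContDiffOn ℝ (M + 2 * m - 2) g (Set.Ici 0))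
    (hg0 : ∀ j : ℕ, j ≤ 2 * m - 3 → iteratedDerivWithin j g (Set.Ici 0) 0 = 0)
    (hgb : ∀ r : ℝ, 0 ≤ r → ∀ N : ℕ, N ≤ M + 2 * m - 2 →
      ‖iteratedDerivWithin N g (Set.Ici 0) r‖ ≤
        A * Real.sqrt (1 + r ^ 2) ^ (((n : ℝ) - 3) / 2 - N)) :
    ∃ C > 0, ∀ r : ℝ, 0 < r → ∀ N : ℕ, N ≤ M →
      ‖iteratedDerivWithin N (fun ρ : ℝ => g ρ / (ρ : ℂ) ^ (2 * m - 2)) (Set.Ioi 0) r‖ ≤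
        C * Real.sqrt (1 + r ^ 2) ^ (((n : ℝ) + 1) / 2 - 2 * m - N) :=
  stmt_18_general n m hm M A hA g hg hg0 hgb
end
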